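/- Let A be a commutative ℂ-algebra, Ω an A-module, and let (m₁, τ, τ') be first-order deformation data making A[ε] an associative algebra under • and Ω[ε] an A[ε]-bimodule (ε² = 0), with bracket {f,g} := m₁(f,g) − m₁(g,f) and preconnection ∇̂_f ω := τ(f,ω) − τ'(ω,f). Suppose further d : A → Ω and d₁ : A → Ω are ℂ-linear maps such that D : A[ε] → Ω[ε], D(f + εg) := df + ε(d₁f + dg), satisfies the Leibniz rule D(F•G) = (DF)•G + F•(DG) for all F,G ∈ A[ε]. Then d is a derivation for the undeformed structure, and the Poisson-compatibility condition holds: ∇̂_f(dg) − ∇̂_g(df) = d{f,g} for all f,g ∈ A. -/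

import Mathlib

/-!
Evaluate the Leibniz rule for `D` on two `ε`-free elements `f, g`. Its `ε⁰` part says that `d`
is a derivation; its `ε¹` part says
`d₁(fg) + d m₁(f,g) = g·d₁f + τ'(df, g) + f·d₁g + τ(f, dg)`.
Antisymmetrizing in `f, g`, the `d₁` terms cancel since `A` is commutative, and what remains
is the compatibility `∇̂_f(dg) - ∇̂_g(df) = d{f,g}`.
-/

noncomputable section

namespace Semiclassical

section

variable {A : Type} [CommRing A] [Algebra ℂ A]
variable {Ω : Type} [AddCommGroup Ω] [Module A Ω] [Module ℂ Ω] [IsScalarTower ℂ A Ω]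

/-- The deformed product on the dual-number extension `A[ε] = A ⊕ εA`
(`ε² = 0`), encoded on pairs: ℂ[ε]-bilinear extension of
`f • g = fg + ε·m₁(f,g)`. -/
def bullet (m₁ : A →ₗ[ℂ] A →ₗ[ℂ] A) (x y : A × A) : A × A :=
  (x.1 * y.1, x.1 * y.2 + x.2 * y.1 + m₁ x.1 y.1)

/-- The deformed left action of `A[ε]` on `Ω[ε] = Ω ⊕ εΩ`. -/
def lact (τ : A →ₗ[ℂ] Ω →ₗ[ℂ] Ω) (F : A × A) (W : Ω × Ω) : Ω × Ω :=
  (F.1 • W.1, F.1 • W.2 + F.2 • W.1 + τ F.1 W.1)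

/-- The deformed right action of `A[ε]` on `Ω[ε] = Ω ⊕ εΩ`. -/
def ract (τ' : Ω →ₗ[ℂ] A →ₗ[ℂ] Ω) (W : Ω × Ω) (F : A × A) : Ω × Ω :=
  (F.1 • W.1, F.1 • W.2 + F.2 • W.1 + τ' W.1 F.1)

/-- The deformed differential `D(f + εg) := df + ε(d₁f + dg)` on `A[ε]`. -/
def Dmap (d d₁ : A →ₗ[ℂ] Ω) (F : A × A) : Ω × Ω :=
  (d F.1, d₁ F.1 + d F.2)

end

section Leibniz

variable {A : Type} [CommRing A] [Algebra ℂ A] {Ω : Type} [AddCommGroup Ω] [Module A Ω] [Module ℂ Ω]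

def IsLeibniz (m₁ : A →ₗ[ℂ] A →ₗ[ℂ] A) (τ : A →ₗ[ℂ] Ω →ₗ[ℂ] Ω) (τ' : Ω →ₗ[ℂ] A →ₗ[ℂ] Ω)
    (d d₁ : A →ₗ[ℂ] Ω) : Prop :=
  ∀ F G : A × A, Dmap d d₁ (bullet m₁ F G) = ract τ' (Dmap d d₁ F) G + lact τ F (Dmap d d₁ G)

variable {m₁ : A →ₗ[ℂ] A →ₗ[ℂ] A} {τ : A →ₗ[ℂ] Ω →ₗ[ℂ] Ω} {τ' : Ω →ₗ[ℂ] A →ₗ[ℂ] Ω}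
  {d d₁ : A →ₗ[ℂ] Ω}

theorem IsLeibniz.map_mul (hD : IsLeibniz m₁ τ τ' d d₁) (f g : A) :
    d (f * g) = f • d g + g • d f := by
  have h := congrArg Prod.fst (hD (f, 0) (g, 0))
  simp only [bullet, Dmap, lact, ract, Prod.fst_add] at h
  rw [h, add_comm]

theorem IsLeibniz.d₁_mul_add_map_m₁ (hD : IsLeibniz m₁ τ τ' d d₁) (f g : A) :
    d₁ (f * g) + d (m₁ f g) = g • d₁ f + τ' (d f) g + (f • d₁ g + τ f (d g)) := by
  simpa [bullet, Dmap, lact, ract] using congrArg Prod.snd (hD (f, 0) (g, 0))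

theorem IsLeibniz.preconnection_sub_eq_map_bracket (hD : IsLeibniz m₁ τ τ' d d₁) (f g : A) :
    (τ f (d g) - τ' (d g) f) - (τ g (d f) - τ' (d f) g) = d (m₁ f g - m₁ g f) := by
  have hfg := hD.d₁_mul_add_map_m₁ f g
  have hgf := hD.d₁_mul_add_map_m₁ g f
  rw [mul_comm g f] at hgf
  have hbracket : d (m₁ f g) - d (m₁ g f) =
      (g • d₁ f + τ' (d f) g + (f • d₁ g + τ f (d g))) -
        (f • d₁ g + τ' (d g) f + (g • d₁ f + τ g (d f))) := by
    rw [← hfg, ← hgf]; abel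
  rw [map_sub, hbracket]; abel

end Leibniz

variable {A : Type} [CommRing A] [Algebra ℂ A]
variable {Ω : Type} [AddCommGroup Ω] [Module A Ω] [Module ℂ Ω] [IsScalarTower ℂ A Ω]

theorem preconnection_poisson_compatible
    (m₁ : A →ₗ[ℂ] A →ₗ[ℂ] A) (τ : A →ₗ[ℂ] Ω →ₗ[ℂ] Ω) (τ' : Ω →ₗ[ℂ] A →ₗ[ℂ] Ω)
    (d d₁ : A →ₗ[ℂ] Ω)
    (hD : ∀ F G : A × A,
      Dmap d d₁ (bullet m₁ F G) =
        ract τ' (Dmap d d₁ F) G + lact τ F (Dmap d d₁ G)) :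
    (∀ f g : A, d (f * g) = f • d g + g • d f) ∧
    (∀ f g : A,
      (τ f (d g) - τ' (d g) f) - (τ g (d f) - τ' (d f) g) =
        d (m₁ f g - m₁ g f)) :=
  have hD : IsLeibniz m₁ τ τ' d d₁ := hD
  ⟨hD.map_mul, hD.preconnection_sub_eq_map_bracket⟩

end Semiclassical
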